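/- Let M be the 3×3 matrix over the polynomial ring C[x,y,z,t,u,v,w,s] given by rows (x, t, s), (y, u, x^2 - z^2 + t^2 + v^2), (z, v, xt + yu + w^2). Then the scheme X defined by the 2×2 minors of M in the weighted projective space P(1,1,1,1,1,1,1,2) (with x,y,z,t,u,v,w of weight 1 and s of weight 2) contains the coordinate point P_s = (0:...:0:1), and in the affine chart s = 1 the Jacobian of the defining equations at P_s has rank 4, with y, z, u, v expressible as implicit functions of the remaining coordinates near P_s. -/

import Mathlib

/-!
At `P_s` every entry of `M` except `s` vanishes. A 2×2 minor avoiding `s` is then a difference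
of products of two functions vanishing at `P_s`, so its differential there is zero; a minor
through `s` is `±(s·m - m'·m'')`, with `m` the entry opposite `s`, so its differential is `±dm`.
The four entries `y, z, u, v` opposite `s` give the Jacobian four rows `±dy, ±dz, ±du, ±dv`
and zeros elsewhere, hence rank `4`.
-/

open MvPolynomial Matrix

theorem Matrix.rank_eq_of_support_row_subset_range {m n K : Type*} [Fintype n] [CommRing K]
    [IsDomain K] {k : ℕ} (A : Matrix m n K) (f : Fin k → m) (e : Fin k → n)
    (hrows : Function.support A.row ⊆ Set.range f) (hdet : (A.submatrix f e).det ≠ 0) :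
    A.rank = k := by
  classical
  refine le_antisymm ?_ ?_
  · calc A.rank ≤ (Finset.univ.image f).card :=
          A.rank_le_card_of_support_subset _ (by simpa using hrows)
      _ ≤ k := by simpa using Finset.card_image_le (s := Finset.univ) (f := f)
  · calc k = (A.submatrix f e).rank := by simp [rank_of_det_ne_zero hdet]
      _ ≤ A.rank := A.rank_submatrix_le f e

namespace MvPolynomial

variable {σ R : Type*} [CommRing R] {a : σ → R}

theorem eval_apply_of_map_eval_eq {m n : Type*} {M : Matrix m n (MvPolynomial σ R)}
    {N : Matrix m n R} (hM : M.map (eval a) = N) (i : m) (j : n) : eval a (M i j) = N i j := by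
  rw [← hM, map_apply]

variable {M : Matrix (Fin 3) (Fin 3) (MvPolynomial σ R)}

theorem eval_adjugate_eq_zero_of_map_eval_eq_single (hM : M.map (eval a) = single 0 2 1)
    (i j : Fin 3) : eval a (M.adjugate i j) = 0 := by
  rw [adjugate_fin_three]
  fin_cases i <;> fin_cases j <;> simp [eval_apply_of_map_eval_eq hM]

theorem eval_pderiv_adjugate_eq_zero_of_map_eval_eq_single (hM : M.map (eval a) = single 0 2 1)
    {i j : Fin 3} (h : i = 2 ∨ j = 0) (k : σ) : eval a (pderiv k (M.adjugate i j)) = 0 := by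
  rw [adjugate_fin_three]
  fin_cases i <;> fin_cases j <;> simp at h <;>
    simp [eval_apply_of_map_eval_eq hM, Derivation.leibniz]

theorem eval_pderiv_adjugate_through_corner_of_map_eval_eq_single
    (hM : M.map (eval a) = single 0 2 1) (k : σ) :
    eval a (pderiv k (M.adjugate 1 2)) = eval a (pderiv k (M 1 0)) ∧
    eval a (pderiv k (M.adjugate 1 1)) = -eval a (pderiv k (M 2 0)) ∧
    eval a (pderiv k (M.adjugate 0 2)) = -eval a (pderiv k (M 1 1)) ∧
    eval a (pderiv k (M.adjugate 0 1)) = eval a (pderiv k (M 2 1)) := by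
  simp [adjugate_fin_three, eval_apply_of_map_eval_eq hM, Derivation.leibniz]

end MvPolynomial

/-- The coordinates `x, y, z, t, u, v, w` of the chart `s = 1` are `X 0, …, X 6`, `P_s` is its
origin, and the nine 2×2 minors of `M` are the entries of `M.adjugate`. -/
theorem p2xp2_model_quasismooth_at_Ps
    (M : Matrix (Fin 3) (Fin 3) (MvPolynomial (Fin 7) ℂ))
    (hM : M = ![![X 0, X 3, 1],
                ![X 1, X 4, X 0 ^ 2 - X 2 ^ 2 + X 3 ^ 2 + X 5 ^ 2],
                ![X 2, X 5, X 0 * X 3 + X 1 * X 4 + X 6 ^ 2]])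
    (J : Matrix (Fin 3 × Fin 3) (Fin 7) ℂ)
    (hJ : ∀ p k, J p k = eval 0 (pderiv k (M.adjugate p.1 p.2))) :
    (∀ p : Fin 3 × Fin 3, eval (0 : Fin 7 → ℂ) (M.adjugate p.1 p.2) = 0) ∧
    J.rank = 4 := by
  have hPs : M.map (eval 0) = single 0 2 1 := by
    ext i j
    rw [map_apply, hM]
    fin_cases i <;> fin_cases j <;> simp
  refine ⟨fun p => eval_adjugate_eq_zero_of_map_eval_eq_single hPs p.1 p.2, ?_⟩
  refine J.rank_eq_of_support_row_subset_range ![(1, 2), (1, 1), (0, 2), (0, 1)]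
    ![1, 2, 4, 5] ?_ ?_
  · refine Function.support_subset_iff'.2 fun ⟨i, j⟩ hp => funext fun k => ?_
    rw [row_apply, hJ]
    refine eval_pderiv_adjugate_eq_zero_of_map_eval_eq_single hPs ?_ k
    fin_cases i <;> fin_cases j <;> simp at hp ⊢
  · have hcorner := eval_pderiv_adjugate_through_corner_of_map_eval_eq_single hPs
    have hsub : J.submatrix ![(1, 2), (1, 1), (0, 2), (0, 1)] ![1, 2, 4, 5] =
        diagonal ![1, -1, -1, 1] := by
      ext r c
      rw [submatrix_apply, hJ]
      fin_cases r <;> fin_cases c <;> dsimp <;> simp only [hcorner] <;> simp [hM]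
    simp [hsub, det_diagonal, Fin.prod_univ_succ]
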